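/- arXiv:2307.04369 — 6 statements merged into one kernel-verified Lean document; each statement's English description precedes it below -/
import Mathlib

section
/- The maximum number of triangles in a 6-vertex graph containing no copy of the suspension of P4 is exactly 5; that is, ex(6, K₃, P̂₄) = 5. -/
/-- `H` is contained in `G` as a (not necessarily induced) subgraph:
there is an injective map of vertices carrying edges of `H` to edges of `G`. -/
def Contains {α β : Type*} (H : SimpleGraph α) (G : SimpleGraph β) : Prop :=
  ∃ f : α → β, Function.Injective f ∧ ∀ ⦃a b⦄, H.Adj a b → G.Adj (f a) (f b)

/-- The suspension `P̂₄` of the path on 4 vertices: a new apex vertex `none`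
is joined to all four vertices of `P₄`. -/
def hatP4 : SimpleGraph (Option (Fin 4)) :=
  SimpleGraph.fromRel (fun a b =>
    (∃ i j, a = some i ∧ b = some j ∧ (SimpleGraph.pathGraph 4).Adj i j) ∨ a = none)

/-- The number of triangles (3-cliques) of a graph. -/
noncomputable def triangleCount {V : Type*} (G : SimpleGraph V) : ℕ :=
  (G.cliqueSet 3).ncard

/-! ### Auxiliary machinery -/

abbrev T3 := Fin 6 × Fin 6 × Fin 6
abbrev T5 := Fin 6 × Fin 6 × Fin 6 × Fin 6 × Fin 6

def pidx (i j : ℕ) : ℕ := 4*i + j - 1 - i*(i-1)/2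

def sidx (a b : Fin 6) : ℕ := pidx (min a.val b.val) (max a.val b.val)

def adjB (m : ℕ) (a b : Fin 6) : Bool := a != b && m.testBit (sidx a b)

def tmask (t : T3) : ℕ :=
  (1 <<< sidx t.1 t.2.1) ||| (1 <<< sidx t.1 t.2.2) ||| (1 <<< sidx t.2.1 t.2.2)

def qmask (q : T5) : ℕ :=
  (1 <<< sidx q.1 q.2.1) ||| (1 <<< sidx q.1 q.2.2.1) |||
  (1 <<< sidx q.1 q.2.2.2.1) ||| (1 <<< sidx q.1 q.2.2.2.2) |||
  (1 <<< sidx q.2.1 q.2.2.1) ||| (1 <<< sidx q.2.2.1 q.2.2.2.1) |||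
  (1 <<< sidx q.2.2.2.1 q.2.2.2.2)

def L20 : List T3 := [(0,1,2), (0,1,3), (0,1,4), (0,1,5), (0,2,3), (0,2,4), (0,2,5), (0,3,4), (0,3,5), (0,4,5), (1,2,3), (1,2,4), (1,2,5), (1,3,4), (1,3,5), (1,4,5), (2,3,4), (2,3,5), (2,4,5), (3,4,5)]
def M20 : List Nat := [35, 69, 137, 273, 518, 1034, 2066, 4108, 8212, 16408, 608, 1184, 2336, 4288, 8512, 16768, 5632, 10752, 19456, 28672]
def L360 : List T5 := [(0, 1, 2, 3, 4), (0, 1, 2, 3, 5), (0, 1, 2, 4, 3), (0, 1, 2, 4, 5), (0, 1, 2, 5, 3), (0, 1, 2, 5, 4), (0, 1, 3, 2, 4), (0, 1, 3, 2, 5), (0, 1, 3, 4, 2), (0, 1, 3, 4, 5), (0, 1, 3, 5, 2), (0, 1, 3, 5, 4), (0, 1, 4, 2, 3), (0, 1, 4, 2, 5), (0, 1, 4, 3, 2), (0, 1, 4, 3, 5), (0, 1, 4, 5, 2), (0, 1, 4, 5, 3), (0, 1, 5, 2, 3), (0, 1, 5, 2, 4), (0, 1, 5, 3, 2), (0, 1,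 5, 3, 4), (0, 1, 5, 4, 2), (0, 1, 5, 4, 3), (0, 2, 1, 3, 4), (0, 2, 1, 3, 5), (0, 2, 1, 4, 3), (0, 2, 1, 4, 5), (0, 2, 1, 5, 3), (0, 2, 1, 5, 4), (0, 2, 3, 1, 4), (0, 2, 3, 1, 5), (0, 2, 3, 4, 5), (0, 2, 3, 5, 4), (0, 2, 4, 1, 3), (0, 2, 4, 1, 5), (0, 2, 4, 3, 5), (0, 2, 4, 5, 3), (0, 2, 5, 1, 3), (0, 2, 5, 1, 4), (0, 2, 5, 3, 4), (0, 2, 5, 4, 3), (0, 3, 1, 2, 4), (0, 3, 1, 2, 5), (0, 3, 1, 4, 5), (0, 3, 1, 5, 4), (0, 3, 2, 1, 4), (0, 3, 2, 1, 5), (0, 3, 2, 4, 5), (0, 3, 2, 5, 4), (0, 3, 4, 1, 5), (0, 3, 4, 2, 5), (0, 3, 5, 1, 4), (0, 3, 5, 2, 4), (0, 4, 1, 2, 5), (0, 4, 1, 3, 5), (0, 4, 2, 1, 5), (0, 4, 2, 3, 5), (0, 4, 3, 1, 5), (0, 4, 3, 2, 5), (1, 0, 2, 3, 4), (1, 0,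 2, 3, 5), (1, 0, 2, 4, 3), (1, 0, 2, 4, 5), (1, 0, 2, 5, 3), (1, 0, 2, 5, 4), (1, 0, 3, 2, 4), (1, 0, 3, 2, 5), (1, 0, 3, 4, 2), (1, 0, 3, 4, 5), (1, 0, 3, 5, 2), (1, 0, 3, 5, 4), (1, 0, 4, 2, 3), (1, 0, 4, 2, 5), (1, 0, 4, 3, 2), (1, 0, 4, 3, 5), (1, 0, 4, 5, 2), (1, 0, 4, 5, 3), (1, 0, 5, 2, 3), (1, 0, 5, 2, 4), (1, 0, 5, 3, 2), (1, 0, 5, 3, 4), (1, 0, 5, 4, 2), (1, 0, 5, 4, 3), (1, 2, 0, 3, 4), (1, 2, 0, 3, 5), (1, 2, 0, 4, 3), (1, 2, 0, 4, 5), (1, 2, 0, 5, 3), (1, 2, 0, 5, 4), (1, 2, 3, 0, 4), (1, 2, 3, 0, 5), (1, 2, 3, 4, 5), (1, 2, 3, 5, 4), (1, 2, 4, 0, 3), (1, 2, 4, 0, 5), (1, 2, 4, 3, 5), (1, 2, 4, 5, 3), (1, 2, 5, 0, 3), (1, 2, 5, 0, 4), (1, 2, 5, 3, 4), (1, 2,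 5, 4, 3), (1, 3, 0, 2, 4), (1, 3, 0, 2, 5), (1, 3, 0, 4, 5), (1, 3, 0, 5, 4), (1, 3, 2, 0, 4), (1, 3, 2, 0, 5), (1, 3, 2, 4, 5), (1, 3, 2, 5, 4), (1, 3, 4, 0, 5), (1, 3, 4, 2, 5), (1, 3, 5, 0, 4), (1, 3, 5, 2, 4), (1, 4, 0, 2, 5), (1, 4, 0, 3, 5), (1, 4, 2, 0, 5), (1, 4, 2, 3, 5), (1, 4, 3, 0, 5), (1, 4, 3, 2, 5), (2, 0, 1, 3, 4), (2, 0, 1, 3, 5), (2, 0, 1, 4, 3), (2, 0, 1, 4, 5), (2, 0, 1, 5, 3), (2, 0, 1, 5, 4), (2, 0, 3, 1, 4), (2, 0, 3, 1, 5), (2, 0, 3, 4, 1), (2, 0, 3, 4, 5), (2, 0, 3, 5, 1), (2, 0, 3, 5, 4), (2, 0, 4, 1, 3), (2, 0, 4, 1, 5), (2, 0, 4, 3, 1), (2, 0, 4, 3, 5), (2, 0, 4, 5, 1), (2, 0, 4, 5, 3), (2, 0, 5, 1, 3), (2, 0, 5, 1, 4), (2, 0, 5, 3, 1), (2, 0,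 5, 3, 4), (2, 0, 5, 4, 1), (2, 0, 5, 4, 3), (2, 1, 0, 3, 4), (2, 1, 0, 3, 5), (2, 1, 0, 4, 3), (2, 1, 0, 4, 5), (2, 1, 0, 5, 3), (2, 1, 0, 5, 4), (2, 1, 3, 0, 4), (2, 1, 3, 0, 5), (2, 1, 3, 4, 5), (2, 1, 3, 5, 4), (2, 1, 4, 0, 3), (2, 1, 4, 0, 5), (2, 1, 4, 3, 5), (2, 1, 4, 5, 3), (2, 1, 5, 0, 3), (2, 1, 5, 0, 4), (2, 1, 5, 3, 4), (2, 1, 5, 4, 3), (2, 3, 0, 1, 4), (2, 3, 0, 1, 5), (2, 3, 0, 4, 5), (2, 3, 0, 5, 4), (2, 3, 1, 0, 4), (2, 3, 1, 0, 5), (2, 3, 1, 4, 5), (2, 3, 1, 5, 4), (2, 3, 4, 0, 5), (2, 3, 4, 1, 5), (2, 3, 5, 0, 4), (2, 3, 5, 1, 4), (2, 4, 0, 1, 5), (2, 4, 0, 3, 5), (2, 4, 1, 0, 5), (2, 4, 1, 3, 5), (2, 4, 3, 0, 5), (2, 4, 3, 1, 5), (3, 0, 1, 2, 4), (3, 0,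 1, 2, 5), (3, 0, 1, 4, 2), (3, 0, 1, 4, 5), (3, 0, 1, 5, 2), (3, 0, 1, 5, 4), (3, 0, 2, 1, 4), (3, 0, 2, 1, 5), (3, 0, 2, 4, 1), (3, 0, 2, 4, 5), (3, 0, 2, 5, 1), (3, 0, 2, 5, 4), (3, 0, 4, 1, 2), (3, 0, 4, 1, 5), (3, 0, 4, 2, 1), (3, 0, 4, 2, 5), (3, 0, 4, 5, 1), (3, 0, 4, 5, 2), (3, 0, 5, 1, 2), (3, 0, 5, 1, 4), (3, 0, 5, 2, 1), (3, 0, 5, 2, 4), (3, 0, 5, 4, 1), (3, 0, 5, 4, 2), (3, 1, 0, 2, 4), (3, 1, 0, 2, 5), (3, 1, 0, 4, 2), (3, 1, 0, 4, 5), (3, 1, 0, 5, 2), (3, 1, 0, 5, 4), (3, 1, 2, 0, 4), (3, 1, 2, 0, 5), (3, 1, 2, 4, 5), (3, 1, 2, 5, 4), (3, 1, 4, 0, 2), (3, 1, 4, 0, 5), (3, 1, 4, 2, 5), (3, 1, 4, 5, 2), (3, 1, 5, 0, 2), (3, 1, 5, 0, 4), (3, 1, 5, 2, 4), (3, 1,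 5, 4, 2), (3, 2, 0, 1, 4), (3, 2, 0, 1, 5), (3, 2, 0, 4, 5), (3, 2, 0, 5, 4), (3, 2, 1, 0, 4), (3, 2, 1, 0, 5), (3, 2, 1, 4, 5), (3, 2, 1, 5, 4), (3, 2, 4, 0, 5), (3, 2, 4, 1, 5), (3, 2, 5, 0, 4), (3, 2, 5, 1, 4), (3, 4, 0, 1, 5), (3, 4, 0, 2, 5), (3, 4, 1, 0, 5), (3, 4, 1, 2, 5), (3, 4, 2, 0, 5), (3, 4, 2, 1, 5), (4, 0, 1, 2, 3), (4, 0, 1, 2, 5), (4, 0, 1, 3, 2), (4, 0, 1, 3, 5), (4, 0, 1, 5, 2), (4, 0, 1, 5, 3), (4, 0, 2, 1, 3), (4, 0, 2, 1, 5), (4, 0, 2, 3, 1), (4, 0, 2, 3, 5), (4, 0, 2, 5, 1), (4, 0, 2, 5, 3), (4, 0, 3, 1, 2), (4, 0, 3, 1, 5), (4, 0, 3, 2, 1), (4, 0, 3, 2, 5), (4, 0, 3, 5, 1), (4, 0, 3, 5, 2), (4, 0, 5, 1, 2), (4, 0, 5, 1, 3), (4, 0, 5, 2, 1), (4, 0,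 5, 2, 3), (4, 0, 5, 3, 1), (4, 0, 5, 3, 2), (4, 1, 0, 2, 3), (4, 1, 0, 2, 5), (4, 1, 0, 3, 2), (4, 1, 0, 3, 5), (4, 1, 0, 5, 2), (4, 1, 0, 5, 3), (4, 1, 2, 0, 3), (4, 1, 2, 0, 5), (4, 1, 2, 3, 5), (4, 1, 2, 5, 3), (4, 1, 3, 0, 2), (4, 1, 3, 0, 5), (4, 1, 3, 2, 5), (4, 1, 3, 5, 2), (4, 1, 5, 0, 2), (4, 1, 5, 0, 3), (4, 1, 5, 2, 3), (4, 1, 5, 3, 2), (4, 2, 0, 1, 3), (4, 2, 0, 1, 5), (4, 2, 0, 3, 5), (4, 2, 0, 5, 3), (4, 2, 1, 0, 3), (4, 2, 1, 0, 5), (4, 2, 1, 3, 5), (4, 2, 1, 5, 3), (4, 2, 3, 0, 5), (4, 2, 3, 1, 5), (4, 2, 5, 0, 3), (4, 2, 5, 1, 3), (4, 3, 0, 1, 5), (4, 3, 0, 2, 5), (4, 3, 1, 0, 5), (4, 3, 1, 2, 5), (4, 3, 2, 0, 5), (4, 3, 2, 1, 5), (5, 0, 1, 2, 3), (5, 0,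 1, 2, 4), (5, 0, 1, 3, 2), (5, 0, 1, 3, 4), (5, 0, 1, 4, 2), (5, 0, 1, 4, 3), (5, 0, 2, 1, 3), (5, 0, 2, 1, 4), (5, 0, 2, 3, 1), (5, 0, 2, 3, 4), (5, 0, 2, 4, 1), (5, 0, 2, 4, 3), (5, 0, 3, 1, 2), (5, 0, 3, 1, 4), (5, 0, 3, 2, 1), (5, 0, 3, 2, 4), (5, 0, 3, 4, 1), (5, 0, 3, 4, 2), (5, 0, 4, 1, 2), (5, 0, 4, 1, 3), (5, 0, 4, 2, 1), (5, 0, 4, 2, 3), (5, 0, 4, 3, 1), (5, 0, 4, 3, 2), (5, 1, 0, 2, 3), (5, 1, 0, 2, 4), (5, 1, 0, 3, 2), (5, 1, 0, 3, 4), (5, 1, 0, 4, 2), (5, 1, 0, 4, 3), (5, 1, 2, 0, 3), (5, 1, 2, 0, 4), (5, 1, 2, 3, 4), (5, 1, 2, 4, 3), (5, 1, 3, 0, 2), (5, 1, 3, 0, 4), (5, 1, 3, 2, 4), (5, 1, 3, 4, 2), (5, 1, 4, 0, 2), (5, 1, 4, 0, 3), (5, 1, 4, 2, 3), (5, 1,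 4, 3, 2), (5, 2, 0, 1, 3), (5, 2, 0, 1, 4), (5, 2, 0, 3, 4), (5, 2, 0, 4, 3), (5, 2, 1, 0, 3), (5, 2, 1, 0, 4), (5, 2, 1, 3, 4), (5, 2, 1, 4, 3), (5, 2, 3, 0, 4), (5, 2, 3, 1, 4), (5, 2, 4, 0, 3), (5, 2, 4, 1, 3), (5, 3, 0, 1, 4), (5, 3, 0, 2, 4), (5, 3, 1, 0, 4), (5, 3, 1, 2, 4), (5, 3, 2, 0, 4), (5, 3, 2, 1, 4)]
def M360 : List Nat := [4655, 8759, 5167, 17467, 10295, 18491, 1615, 2647, 5199, 20573, 10327, 24669, 1679, 3227, 4751, 12445, 18587, 24733, 2839, 3355, 8983, 12573, 17691, 20765, 4207, 8311, 4271, 16571, 8503, 16699, 719, 855, 21022, 25118, 1231, 1435, 13342, 25630, 2391, 2459, 14366, 22558, 1135, 2167, 16605, 16733, 687, 823, 17950, 18974, 4509, 7198, 8605, 11294, 2235, 8413, 1339, 9758, 4445, 6686, 4835, 9059, 5347, 17827, 10595, 18851, 1765, 2917, 5349, 20933, 10597, 25029, 1769, 3497, 4841, 12745, 18857, 25033, 2929,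 3505, 9073, 12753, 17841, 20945, 4327, 8551, 4331, 16811, 8563, 16819, 749, 885, 21472, 25568, 1261, 1465, 13792, 26080, 2421, 2489, 14816, 23008, 1255, 2407, 16845, 16853, 747, 883, 18400, 19424, 4569, 7648, 8665, 11744, 2475, 8653, 1459, 10208, 4565, 7136, 5731, 10851, 5795, 19619, 11043, 19747, 1766, 2918, 5798, 24070, 11046, 28166, 1770, 3498, 5738, 15882, 19754, 28170, 2930, 3506, 10866, 15890, 19634, 24082, 5671, 10791, 5675, 19499, 10803, 19507, 1646, 2678, 24160, 28256, 1710, 3258, 16032, 28320, 2870, 3386, 16160, 24352, 1703, 2855, 19982, 19990, 1643, 2675, 20192, 20320, 7706, 8096, 11802, 12192, 3371, 11790, 3251, 12000, 7702, 8032, 5733, 10853, 5829, 28869, 11077, 28997, 4838, 9062, 5830, 30214, 11078, 31238, 4844, 12748, 5740, 15884, 29004, 31244, 9076, 12756, 10868, 15892, 28884, 30228, 5703, 10823, 5709, 28749, 10837, 28757, 4718, 8822, 30304, 31328, 4814, 12508, 16064, 31424, 9046, 12636, 16192, 30528, 4807, 9031, 29198, 29206, 4717, 8821, 29408, 29536,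 13852, 14272, 14876, 15296, 12621, 14862, 12501, 15072, 13846, 14176, 5801, 19625, 5833, 28873, 19849, 29065, 5354, 17834, 5834, 30218, 19850, 31754, 5356, 20940, 5804, 24076, 29068, 31756, 17848, 20952, 19640, 24088, 28888, 30232, 5771, 19595, 5773, 28813, 19609, 28825, 5294, 17594, 30368, 31904, 5326, 20700, 24256, 31936, 17818, 20892, 24448, 30592, 5323, 17803, 29710, 29722, 5293, 17593, 29920, 30112, 22044, 22464, 23580, 24000, 20877, 23566, 20697, 23776, 22042, 22432, 11057, 19761, 11089, 29009, 19857, 29073, 10610, 18866, 11090, 31250, 19858, 31762, 10612, 25044, 11060, 28180, 29076, 31764, 18872, 25048, 19768, 28184, 29016, 31256, 11027, 19731, 11029, 28949, 19737, 28953, 10550, 18746, 31520, 32032, 10582, 24924, 28480, 32064, 18842, 24988, 28544, 31616, 10579, 18835, 30742, 30746, 10549, 18745, 31072, 31136, 27164, 27584, 27676, 28096, 24981, 27670, 24921, 28000, 27162, 27552]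

def subm (m c : ℕ) : Bool := m &&& c == c

def check (m : ℕ) : Bool :=
  decide (M20.countP (subm m) ≤ 5) || M360.any (subm m)

def enc : List Bool → ℕ
  | [] => 0
  | b :: bs => b.toNat + 2 * enc bs

lemma enc_lt (L : List Bool) : enc L < 2 ^ L.length := by
  induction L with
  | nil => simp [enc]
  | cons b bs ih =>
    have : b.toNat ≤ 1 := Bool.toNat_le b
    simp only [enc, List.length_cons, pow_succ]
    omega

lemma testBit_enc (L : List Bool) (i : ℕ) : (enc L).testBit i = L.getD i false := by
  induction L generalizing i with
  | nil => simp [enc]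
  | cons b bs ih =>
    cases i with
    | zero =>
      simp only [enc, Nat.testBit_zero, List.getD_cons_zero]
      cases b <;> simp [Nat.add_mul_mod_self_left]
    | succ i =>
      have h2 : (b.toNat + 2 * enc bs) / 2 = enc bs := by
        have : b.toNat ≤ 1 := Bool.toNat_le b
        omega
      simp only [enc, Nat.testBit_succ, h2, ih, List.getD_cons_succ]

set_option maxRecDepth 10000 in
lemma band_elim {a b : Bool} (h : (a && b) = true) : a = true ∧ b = true := by
  simp_all

lemma band_intro {a b : Bool} (ha : a = true) (hb : b = true) : (a && b) = true := by
  simp_all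

lemma adjB_enc (L : List Bool) (a b : Fin 6) :
    adjB (enc L) a b = (a != b && L.getD (sidx a b) false) := by
  rw [adjB, testBit_enc]

lemma hM20 : M20 = L20.map tmask := by decide

set_option maxRecDepth 100000 in
lemma hM360 : M360 = L360.map qmask := by decide

/-! ### bit lemmas -/

lemma subm_testBit {m c : ℕ} (h : subm m c = true) {i : ℕ}
    (hc : c.testBit i = true) : m.testBit i = true := by
  have h' : m &&& c = c := by simpa [subm] using h
  have := congrArg (Nat.testBit · i) h'
  simpa [Nat.testBit_and, hc] using this

lemma testBit_shift_or {i : ℕ} {a b : ℕ} (h : a.testBit i = true ∨ b.testBit i = true) :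
    (a ||| b).testBit i = true := by
  rcases h with h | h <;> simp [Nat.testBit_or, h]

lemma testBit_self (k : ℕ) : (1 <<< k).testBit k = true := by
  simp [Nat.one_shiftLeft, Nat.testBit_two_pow]

lemma subm_of_three {m k1 k2 k3 : ℕ} (h1 : m.testBit k1 = true)
    (h2 : m.testBit k2 = true) (h3 : m.testBit k3 = true) :
    subm m ((1 <<< k1) ||| (1 <<< k2) ||| (1 <<< k3)) = true := by
  have : m &&& ((1 <<< k1) ||| (1 <<< k2) ||| (1 <<< k3))
      = ((1 <<< k1) ||| (1 <<< k2) ||| (1 <<< k3)) := by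
    apply Nat.eq_of_testBit_eq
    intro i
    simp only [Nat.testBit_and, Nat.testBit_or, Nat.one_shiftLeft, Nat.testBit_two_pow]
    by_cases e1 : k1 = i <;> by_cases e2 : k2 = i <;> by_cases e3 : k3 = i <;>
      simp_all
  simpa [subm] using this

/-! ### the exhaustive verification -/

set_option maxRecDepth 100000 in
set_option maxHeartbeats 8000000 in
lemma key0 : (List.range' 0 2048).all check = true := by decide

set_option maxRecDepth 100000 in
set_option maxHeartbeats 8000000 in
lemma key1 : (List.range' 2048 2048).all check = true := by decide

set_option maxRecDepth 100000 in
set_option maxHeartbeats 8000000 in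
lemma key2 : (List.range' 4096 2048).all check = true := by decide

set_option maxRecDepth 100000 in
set_option maxHeartbeats 8000000 in
lemma key3 : (List.range' 6144 2048).all check = true := by decide

set_option maxRecDepth 100000 in
set_option maxHeartbeats 8000000 in
lemma key4 : (List.range' 8192 2048).all check = true := by decide

set_option maxRecDepth 100000 in
set_option maxHeartbeats 8000000 in
lemma key5 : (List.range' 10240 2048).all check = true := by decide

set_option maxRecDepth 100000 in
set_option maxHeartbeats 8000000 in
lemma key6 : (List.range' 12288 2048).all check = true := by decide

set_option maxRecDepth 100000 in
set_option maxHeartbeats 8000000 in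
lemma key7 : (List.range' 14336 2048).all check = true := by decide

set_option maxRecDepth 100000 in
set_option maxHeartbeats 8000000 in
lemma key8 : (List.range' 16384 2048).all check = true := by decide

set_option maxRecDepth 100000 in
set_option maxHeartbeats 8000000 in
lemma key9 : (List.range' 18432 2048).all check = true := by decide

set_option maxRecDepth 100000 in
set_option maxHeartbeats 8000000 in
lemma key10 : (List.range' 20480 2048).all check = true := by decide

set_option maxRecDepth 100000 in
set_option maxHeartbeats 8000000 in
lemma key11 : (List.range' 22528 2048).all check = true := by decide

set_option maxRecDepth 100000 in
set_option maxHeartbeats 8000000 in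
lemma key12 : (List.range' 24576 2048).all check = true := by decide

set_option maxRecDepth 100000 in
set_option maxHeartbeats 8000000 in
lemma key13 : (List.range' 26624 2048).all check = true := by decide

set_option maxRecDepth 100000 in
set_option maxHeartbeats 8000000 in
lemma key14 : (List.range' 28672 2048).all check = true := by decide

set_option maxRecDepth 100000 in
set_option maxHeartbeats 8000000 in
lemma key15 : (List.range' 30720 2048).all check = true := by decide

lemma key : ∀ m < 32768, check m = true := by
  have hmem : ∀ s n : ℕ, (List.range' s n).all check = true →
      ∀ x : ℕ, s ≤ x → x < s + n → check x = true := by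
    intro s n h x h1 h2
    exact List.all_eq_true.mp h x (List.mem_range'_1.mpr ⟨h1, h2⟩)
  intro m hm
  rcases Nat.lt_or_ge m 2048 with h | h
  · exact hmem 0 2048 key0 m (by omega) (by omega)
  rcases Nat.lt_or_ge m 4096 with h | h
  · exact hmem 2048 2048 key1 m (by omega) (by omega)
  rcases Nat.lt_or_ge m 6144 with h | h
  · exact hmem 4096 2048 key2 m (by omega) (by omega)
  rcases Nat.lt_or_ge m 8192 with h | h
  · exact hmem 6144 2048 key3 m (by omega) (by omega)
  rcases Nat.lt_or_ge m 10240 with h | h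
  · exact hmem 8192 2048 key4 m (by omega) (by omega)
  rcases Nat.lt_or_ge m 12288 with h | h
  · exact hmem 10240 2048 key5 m (by omega) (by omega)
  rcases Nat.lt_or_ge m 14336 with h | h
  · exact hmem 12288 2048 key6 m (by omega) (by omega)
  rcases Nat.lt_or_ge m 16384 with h | h
  · exact hmem 14336 2048 key7 m (by omega) (by omega)
  rcases Nat.lt_or_ge m 18432 with h | h
  · exact hmem 16384 2048 key8 m (by omega) (by omega)
  rcases Nat.lt_or_ge m 20480 with h | h
  · exact hmem 18432 2048 key9 m (by omega) (by omega)
  rcases Nat.lt_or_ge m 22528 with h | h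
  · exact hmem 20480 2048 key10 m (by omega) (by omega)
  rcases Nat.lt_or_ge m 24576 with h | h
  · exact hmem 22528 2048 key11 m (by omega) (by omega)
  rcases Nat.lt_or_ge m 26624 with h | h
  · exact hmem 24576 2048 key12 m (by omega) (by omega)
  rcases Nat.lt_or_ge m 28672 with h | h
  · exact hmem 26624 2048 key13 m (by omega) (by omega)
  rcases Nat.lt_or_ge m 30720 with h | h
  · exact hmem 28672 2048 key14 m (by omega) (by omega)
  rcases Nat.lt_or_ge m 32768 with h | h
  · exact hmem 30720 2048 key15 m (by omega) (by omega)
  omega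

/-! ### bridging: `Contains hatP4` and quintuples -/

instance : DecidableRel (SimpleGraph.pathGraph 4).Adj := fun _ _ =>
  decidable_of_iff _ SimpleGraph.pathGraph_adj.symm

instance : DecidableRel hatP4.Adj := fun a b =>
  decidable_of_iff _ (SimpleGraph.fromRel_adj _ a b).symm

lemma contains_iff (G : SimpleGraph (Fin 6)) : Contains hatP4 G ↔
    ∃ v p0 p1 p2 p3 : Fin 6,
      (v ≠ p0 ∧ v ≠ p1 ∧ v ≠ p2 ∧ v ≠ p3 ∧ p0 ≠ p1 ∧ p0 ≠ p2 ∧ p0 ≠ p3 ∧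
        p1 ≠ p2 ∧ p1 ≠ p3 ∧ p2 ≠ p3) ∧
      G.Adj v p0 ∧ G.Adj v p1 ∧ G.Adj v p2 ∧ G.Adj v p3 ∧
      G.Adj p0 p1 ∧ G.Adj p1 p2 ∧ G.Adj p2 p3 := by
  constructor
  · rintro ⟨f, hinj, hf⟩
    refine ⟨f none, f (some 0), f (some 1), f (some 2), f (some 3),
      ⟨fun h => by simpa using hinj h, fun h => by simpa using hinj h,
       fun h => by simpa using hinj h, fun h => by simpa using hinj h,
       fun h => by simpa using hinj h, fun h => by simpa using hinj h,
       fun h => by simpa using hinj h, fun h => by simpa using hinj h,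
       fun h => by simpa using hinj h, fun h => by simpa using hinj h⟩,
      hf (by decide), hf (by decide), hf (by decide), hf (by decide),
      hf (by decide), hf (by decide), hf (by decide)⟩
  · rintro ⟨v, p0, p1, p2, p3, ⟨d1, d2, d3, d4, d5, d6, d7, d8, d9, d10⟩,
      h0, h1, h2, h3, h01, h12, h23⟩
    set w : Fin 4 → Fin 6 :=
      fun i => if i = 0 then p0 else if i = 1 then p1 else if i = 2 then p2 else p3 with hwdef
    have hw : ∀ i j : Fin 4, (SimpleGraph.pathGraph 4).Adj i j → G.Adj (w i) (w j) := by
      intro i j hij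
      have hv := SimpleGraph.pathGraph_adj.mp hij
      fin_cases i <;> fin_cases j <;>
        first
          | exact h01 | exact h01.symm | exact h12 | exact h12.symm
          | exact h23 | exact h23.symm
          | (exfalso; revert hv; decide)
    refine ⟨fun o => o.elim v w, ?_, ?_⟩
    · intro x y hxy
      rcases x with _ | i <;> rcases y with _ | j
      · rfl
      · exfalso
        fin_cases j <;>
          first
            | exact absurd hxy d1 | exact absurd hxy d2
            | exact absurd hxy d3 | exact absurd hxy d4
      · exfalso
        fin_cases i <;>
          first
            | exact absurd hxy.symm d1 | exact absurd hxy.symm d2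
            | exact absurd hxy.symm d3 | exact absurd hxy.symm d4
      · fin_cases i <;> fin_cases j <;>
          first
            | rfl
            | exact absurd hxy d5 | exact absurd hxy.symm d5
            | exact absurd hxy d6 | exact absurd hxy.symm d6
            | exact absurd hxy d7 | exact absurd hxy.symm d7
            | exact absurd hxy d8 | exact absurd hxy.symm d8
            | exact absurd hxy d9 | exact absurd hxy.symm d9
            | exact absurd hxy d10 | exact absurd hxy.symm d10
    · intro a b hab
      rw [hatP4, SimpleGraph.fromRel_adj] at hab
      obtain ⟨hne, (hc | rfl) | (hc | rfl)⟩ := hab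
      · obtain ⟨i, j, rfl, rfl, hij⟩ := hc
        exact hw i j hij
      · rcases b with _ | j
        · exact absurd rfl hne
        · show G.Adj v (w j)
          fin_cases j <;> first | exact h0 | exact h1 | exact h2 | exact h3
      · obtain ⟨i, j, rfl, rfl, hij⟩ := hc
        exact (hw i j hij).symm
      · rcases a with _ | j
        · exact absurd rfl hne
        · show G.Adj (w j) v
          fin_cases j <;>
            first | exact h0.symm | exact h1.symm | exact h2.symm | exact h3.symm

/-! ### counting bridge -/

set_option maxRecDepth 10000 in
set_option maxHeartbeats 4000000 in
lemma cover : ∀ s : Finset (Fin 6), s.card = 3 →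
    ∃ t ∈ L20, t.1 ≠ t.2.1 ∧ t.1 ≠ t.2.2 ∧ t.2.1 ≠ t.2.2 ∧
      s = {t.1, t.2.1, t.2.2} := by decide

def distinctB (q : T5) : Bool :=
  q.1 != q.2.1 && q.1 != q.2.2.1 && q.1 != q.2.2.2.1 && q.1 != q.2.2.2.2 &&
  q.2.1 != q.2.2.1 && q.2.1 != q.2.2.2.1 && q.2.1 != q.2.2.2.2 &&
  q.2.2.1 != q.2.2.2.1 && q.2.2.1 != q.2.2.2.2 && q.2.2.2.1 != q.2.2.2.2

set_option maxRecDepth 100000 in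
set_option maxHeartbeats 4000000 in
lemma ldist : L360.all distinctB = true := by decide

lemma triangleCount_eq (G : SimpleGraph (Fin 6)) [DecidableRel G.Adj] :
    triangleCount G = (G.cliqueFinset 3).card := by
  rw [triangleCount, ← SimpleGraph.coe_cliqueFinset, Set.ncard_coe_finset]

/-! ### upper bound -/

lemma upper (G : SimpleGraph (Fin 6)) (hfree : ¬ Contains hatP4 G) :
    triangleCount G ≤ 5 := by
  classical
  set L : List Bool := [decide (G.Adj 0 1), decide (G.Adj 0 2), decide (G.Adj 0 3),
    decide (G.Adj 0 4), decide (G.Adj 0 5), decide (G.Adj 1 2), decide (G.Adj 1 3),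
    decide (G.Adj 1 4), decide (G.Adj 1 5), decide (G.Adj 2 3), decide (G.Adj 2 4),
    decide (G.Adj 2 5), decide (G.Adj 3 4), decide (G.Adj 3 5), decide (G.Adj 4 5)]
    with hL
  set m := enc L with hmdef
  have hlt : m < 32768 := by
    have h2 : (2:ℕ) ^ (15:ℕ) = 32768 := by norm_num
    have := enc_lt L
    rw [hL] at this
    simpa [h2] using this
  have hadj : ∀ a b : Fin 6, adjB m a b = true ↔ G.Adj a b := by
    intro a b
    rw [hmdef, adjB_enc]
    fin_cases a <;> fin_cases b <;>
      simp [sidx, pidx, hL, decide_eq_true_iff] <;>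
      first
        | exact G.adj_comm _ _
        | exact SimpleGraph.irrefl
  have hcheck : M20.countP (subm m) ≤ 5 ∨ M360.any (subm m) = true := by
    have h := key m hlt
    simpa [check, Bool.or_eq_true, decide_eq_true_iff] using h
  rcases hcheck with htri | hhat
  · rw [triangleCount_eq]
    have hsub : G.cliqueFinset 3 ⊆
        ((L20.filter (fun t => subm m (tmask t))).map
          (fun t => ({t.1, t.2.1, t.2.2} : Finset (Fin 6)))).toFinset := by
      intro s hs
      rw [SimpleGraph.mem_cliqueFinset_iff, SimpleGraph.isNClique_iff] at hs
      obtain ⟨hclique, hcard⟩ := hs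
      obtain ⟨t, htL, hd1, hd2, hd3, hst⟩ := cover s hcard
      have ha : t.1 ∈ s := by rw [hst]; simp
      have hb : t.2.1 ∈ s := by rw [hst]; simp
      have hc : t.2.2 ∈ s := by rw [hst]; simp
      have g1 : G.Adj t.1 t.2.1 := hclique ha hb hd1
      have g2 : G.Adj t.1 t.2.2 := hclique ha hc hd2
      have g3 : G.Adj t.2.1 t.2.2 := hclique hb hc hd3
      have hsm : subm m (tmask t) = true :=
        subm_of_three (band_elim ((hadj _ _).mpr g1)).2
          (band_elim ((hadj _ _).mpr g2)).2
          (band_elim ((hadj _ _).mpr g3)).2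
      rw [List.mem_toFinset]
      exact List.mem_map.mpr ⟨t, List.mem_filter.mpr ⟨by simpa using htL, hsm⟩, hst.symm⟩
    calc (G.cliqueFinset 3).card
        ≤ _ := Finset.card_le_card hsub
      _ ≤ ((L20.filter (fun t => subm m (tmask t))).map
            (fun t => ({t.1, t.2.1, t.2.2} : Finset (Fin 6)))).length :=
          List.toFinset_card_le _
      _ = (L20.filter (fun t => subm m (tmask t))).length := List.length_map _
      _ = L20.countP (fun t => subm m (tmask t)) :=
          List.countP_eq_length_filter.symm
      _ = L20.countP (subm m ∘ tmask) := rfl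
      _ = (L20.map tmask).countP (subm m) := List.countP_map.symm
      _ = M20.countP (subm m) := by rw [hM20]
      _ ≤ 5 := htri
  · exfalso
    apply hfree
    rw [contains_iff]
    obtain ⟨c, hcM, hcs⟩ := List.any_eq_true.mp hhat
    rw [hM360] at hcM
    obtain ⟨q, hqL, rfl⟩ := List.mem_map.mp hcM
    have hd : distinctB q = true := List.all_eq_true.mp ldist q hqL
    simp only [distinctB, Bool.and_eq_true, bne_iff_ne, ne_eq] at hd
    obtain ⟨⟨⟨⟨⟨⟨⟨⟨⟨e1, e2⟩, e3⟩, e4⟩, e5⟩, e6⟩, e7⟩, e8⟩, e9⟩, e10⟩ := hd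
    have t1 : (qmask q).testBit (sidx q.1 q.2.1) = true := by
      simp [qmask, Nat.testBit_or, testBit_self]
    have t2 : (qmask q).testBit (sidx q.1 q.2.2.1) = true := by
      simp [qmask, Nat.testBit_or, testBit_self]
    have t3 : (qmask q).testBit (sidx q.1 q.2.2.2.1) = true := by
      simp [qmask, Nat.testBit_or, testBit_self]
    have t4 : (qmask q).testBit (sidx q.1 q.2.2.2.2) = true := by
      simp [qmask, Nat.testBit_or, testBit_self]
    have t5 : (qmask q).testBit (sidx q.2.1 q.2.2.1) = true := by
      simp [qmask, Nat.testBit_or, testBit_self]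
    have t6 : (qmask q).testBit (sidx q.2.2.1 q.2.2.2.1) = true := by
      simp [qmask, Nat.testBit_or, testBit_self]
    have t7 : (qmask q).testBit (sidx q.2.2.2.1 q.2.2.2.2) = true := by
      simp [qmask, Nat.testBit_or, testBit_self]
    refine ⟨q.1, q.2.1, q.2.2.1, q.2.2.2.1, q.2.2.2.2,
      ⟨e1, e2, e3, e4, e5, e6, e7, e8, e9, e10⟩, ?_, ?_, ?_, ?_, ?_, ?_, ?_⟩
    · exact (hadj _ _).mp (band_intro (bne_iff_ne.mpr e1) (subm_testBit hcs t1))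
    · exact (hadj _ _).mp (band_intro (bne_iff_ne.mpr e2) (subm_testBit hcs t2))
    · exact (hadj _ _).mp (band_intro (bne_iff_ne.mpr e3) (subm_testBit hcs t3))
    · exact (hadj _ _).mp (band_intro (bne_iff_ne.mpr e4) (subm_testBit hcs t4))
    · exact (hadj _ _).mp (band_intro (bne_iff_ne.mpr e5) (subm_testBit hcs t5))
    · exact (hadj _ _).mp (band_intro (bne_iff_ne.mpr e8) (subm_testBit hcs t6))
    · exact (hadj _ _).mp (band_intro (bne_iff_ne.mpr e10) (subm_testBit hcs t7))

/-! ### the extremal graph -/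

def G0 : SimpleGraph (Fin 6) :=
  ⟨fun a b => adjB 5919 a b = true,
   ⟨fun a b h => (by decide : ∀ x y : Fin 6, adjB 5919 x y = true → adjB 5919 y x = true) a b h⟩,
   ⟨fun a h => (by decide : ∀ x : Fin 6, ¬ adjB 5919 x x = true) a h⟩⟩

instance : DecidableRel G0.Adj := fun a b =>
  inferInstanceAs (Decidable (adjB 5919 a b = true))

lemma G0_count : triangleCount G0 = 5 := by
  rw [triangleCount_eq]
  decide

lemma G0_free : ¬ Contains hatP4 G0 := by
  rw [contains_iff]
  decide

/-- `ex(6, K₃, P̂₄) = 5`. -/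
theorem stmt_3 :
    IsGreatest {t : ℕ | ∃ G : SimpleGraph (Fin 6),
      ¬ Contains hatP4 G ∧ triangleCount G = t} 5 := by
  constructor
  · exact ⟨G0, G0_free, G0_count⟩
  · rintro t ⟨G, hG, rfl⟩
    exact upper G hG
end

section
/- For every integer n ≥ 8 there exists an n-vertex graph that is P̂₄-free and contains at least ⌊n²/8⌋ triangles. (Such a graph is obtained from the complete bipartite graph K_{⌊n/2⌋,⌈n/2⌉} by adding a perfect matching inside one part of even size.) -/
open SimpleGraph

theorem Contains.of_embedding {α β γ : Type*} {H : SimpleGraph α} {G : SimpleGraph β}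
    {G' : SimpleGraph γ} (h : Contains H G) (φ : G ↪g G') : Contains H G' := by
  obtain ⟨f, hf, hadj⟩ := h
  exact ⟨φ ∘ f, φ.injective.comp hf, fun a b hab => φ.map_rel_iff.mpr (hadj hab)⟩

theorem triangleCount_map_equiv {α β : Type*} (G : SimpleGraph α) (e : α ≃ β) :
    triangleCount (G.map e) = triangleCount G := by
  rw [triangleCount, triangleCount, cliqueSet_map_of_equiv]
  exact Set.ncard_image_of_injective _ (Finset.map_injective _)

theorem exists_of_contains_hatP4 {V : Type*} {G : SimpleGraph V} (h : Contains hatP4 G) :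
    ∃ x a b c d : V, G.Adj x a ∧ G.Adj x b ∧ G.Adj x c ∧ G.Adj x d ∧
      G.Adj a b ∧ G.Adj b c ∧ G.Adj c d ∧ a ≠ c ∧ a ≠ d ∧ b ≠ d := by
  obtain ⟨f, hf, hadj⟩ := h
  have apex (i : Fin 4) : hatP4.Adj none (some i) := by simp [hatP4]
  have path (i j : Fin 4) (hij : (pathGraph 4).Adj i j) : hatP4.Adj (some i) (some j) := by
    simp [hatP4, hij.ne, hij]
  refine ⟨f none, f (some 0), f (some 1), f (some 2), f (some 3), hadj (apex 0), hadj (apex 1),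
    hadj (apex 2), hadj (apex 3), hadj (path 0 1 ?_), hadj (path 1 2 ?_), hadj (path 2 3 ?_),
    hf.ne (by decide), hf.ne (by decide), hf.ne (by decide)⟩ <;>
  simp [pathGraph_adj]

/-- `K_{2|α|,|β|}` with the perfect matching `{(a, 0), (a, 1)}` added inside the part `α × Fin 2`. -/
def completeBipartiteWithMatching (α β : Type*) : SimpleGraph ((α × Fin 2) ⊕ β) where
  Adj
    | .inl p, .inl p' => p.1 = p'.1 ∧ p.2 ≠ p'.2
    | .inl _, .inr _ => True
    | .inr _, .inl _ => True
    | .inr _, .inr _ => False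
  symm := ⟨by
    rintro (p | b) (p' | b') h
    exacts [⟨h.1.symm, h.2.symm⟩, trivial, trivial, h]⟩
  loopless := ⟨by rintro (p | b) h; exacts [h.2 rfl, h]⟩

namespace completeBipartiteWithMatching

variable {α β : Type*}

@[simp] theorem adj_inl_inl {p p' : α × Fin 2} :
    (completeBipartiteWithMatching α β).Adj (Sum.inl p) (Sum.inl p') ↔ p.1 = p'.1 ∧ p.2 ≠ p'.2 :=
  Iff.rfl

@[simp] theorem adj_inl_inr {p : α × Fin 2} {b : β} :
    (completeBipartiteWithMatching α β).Adj (Sum.inl p) (Sum.inr b) := trivial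

@[simp] theorem adj_inr_inl {p : α × Fin 2} {b : β} :
    (completeBipartiteWithMatching α β).Adj (Sum.inr b) (Sum.inl p) := trivial

@[simp] theorem not_adj_inr_inr {b b' : β} :
    ¬ (completeBipartiteWithMatching α β).Adj (Sum.inr b) (Sum.inr b') := id

theorem exists_eq_inl_of_adj_inr {b : β} {v : (α × Fin 2) ⊕ β}
    (h : (completeBipartiteWithMatching α β).Adj (Sum.inr b) v) : ∃ p, v = .inl p := by
  rcases v with p | b'
  exacts [⟨p, rfl⟩, absurd h not_adj_inr_inr]

theorem exists_inl_of_adj {u v : (α × Fin 2) ⊕ β}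
    (h : (completeBipartiteWithMatching α β).Adj u v) : ∃ p, u = .inl p ∨ v = .inl p := by
  rcases u with p | b
  · exact ⟨p, .inl rfl⟩
  · obtain ⟨p, rfl⟩ := exists_eq_inl_of_adj_inr h
    exact ⟨p, .inr rfl⟩

theorem eq_of_adj_inl_of_adj_inl {p q r : α × Fin 2}
    (hq : (completeBipartiteWithMatching α β).Adj (Sum.inl p) (Sum.inl q))
    (hr : (completeBipartiteWithMatching α β).Adj (Sum.inl p) (Sum.inl r)) : q = r := by
  rw [adj_inl_inl] at hq hr
  exact Prod.ext (hq.1.symm.trans hr.1) (by omega)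

theorem not_contains_hatP4 : ¬ Contains hatP4 (completeBipartiteWithMatching α β) := by
  intro h
  obtain ⟨x, a, b, c, d, hxa, hxb, hxc, hxd, hab, hbc, hcd, hac, had, hbd⟩ :=
    exists_of_contains_hatP4 h
  rcases x with p | w
  · -- each of the edges `ab`, `cd` has an endpoint in `α × Fin 2`, which must be the partner of `p`
    obtain ⟨s, hs⟩ := exists_inl_of_adj hab
    obtain ⟨t, ht⟩ := exists_inl_of_adj hcd
    have hst : s = t := eq_of_adj_inl_of_adj_inl
      (hs.elim (· ▸ hxa) (· ▸ hxb)) (ht.elim (· ▸ hxc) (· ▸ hxd))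
    subst hst
    rcases hs with rfl | rfl <;> rcases ht with h | h
    exacts [hac h.symm, had h.symm, hbc.ne h.symm, hbd h.symm]
  · obtain ⟨a, rfl⟩ := exists_eq_inl_of_adj_inr hxa
    obtain ⟨b, rfl⟩ := exists_eq_inl_of_adj_inr hxb
    obtain ⟨c, rfl⟩ := exists_eq_inl_of_adj_inr hxc
    -- inside `α × Fin 2` the edges form a matching, so the path `a b c` closes up
    exact hac (congrArg _ (eq_of_adj_inl_of_adj_inl hab.symm hbc))

theorem card_mul_card_le_triangleCount [Fintype α] [Fintype β] :
    Fintype.card α * Fintype.card β ≤ triangleCount (completeBipartiteWithMatching α β) := by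
  classical
  let triangle (ab : α × β) : Finset ((α × Fin 2) ⊕ β) :=
    {.inl (ab.1, 0), .inl (ab.1, 1), .inr ab.2}
  have h_mem (ab : α × β) : triangle ab ∈ (completeBipartiteWithMatching α β).cliqueSet 3 := by
    simp [triangle, is3Clique_triple_iff]
  have h_inj : Function.Injective triangle := by
    intro ab ab' h
    have h₁ : Sum.inl (ab.1, 0) ∈ triangle ab' := h ▸ by simp [triangle]
    have h₂ : Sum.inr ab.2 ∈ triangle ab' := h ▸ by simp [triangle]
    simp only [triangle, Finset.mem_insert, Finset.mem_singleton, Sum.inl.injEq, Sum.inr.injEq,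
      Prod.mk.injEq, Fin.zero_ne_one, and_true, and_false, reduceCtorEq, or_self, or_false,
      false_or] at h₁ h₂
    exact Prod.ext h₁ h₂
  simpa [triangleCount] using Set.ncard_le_ncard_of_injOn (s := Set.univ) triangle
    (fun ab _ => h_mem ab) h_inj.injOn (Set.toFinite _)

end completeBipartiteWithMatching

theorem sq_div_eight_le_mul {q m : ℕ} (h₁ : 2 * q ≤ m + 1) (h₂ : m ≤ 2 * q + 2) :
    (2 * q + m) ^ 2 / 8 ≤ q * m := by
  have h_sq : (2 * q + m) ^ 2 < 8 * (q * m + 1) := by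
    zify at h₁ h₂ ⊢
    nlinarith [mul_nonneg (by linarith : (0 : ℤ) ≤ m + 1 - 2 * q)
      (by linarith : (0 : ℤ) ≤ 2 * q + 2 - m)]
  omega

theorem stmt_5_general (n : ℕ) :
    ∃ G : SimpleGraph (Fin n), ¬ Contains hatP4 G ∧ n ^ 2 / 8 ≤ triangleCount G := by
  let q := (n + 1) / 4
  let m := n - 2 * q
  have h_card : Fintype.card ((Fin q × Fin 2) ⊕ Fin m) = n := by simp [m]; omega
  let e := Fintype.equivFinOfCardEq h_card
  refine ⟨(completeBipartiteWithMatching (Fin q) (Fin m)).map e, fun h =>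
    completeBipartiteWithMatching.not_contains_hatP4
      (h.of_embedding (Iso.map e _).symm.toEmbedding), ?_⟩
  rw [triangleCount_map_equiv]
  calc n ^ 2 / 8 = (2 * q + m) ^ 2 / 8 := by congr; omega
    _ ≤ q * m := sq_div_eight_le_mul (by omega) (by omega)
    _ = Fintype.card (Fin q) * Fintype.card (Fin m) := by simp
    _ ≤ _ := completeBipartiteWithMatching.card_mul_card_le_triangleCount

/-- For every `n ≥ 8` there is an `n`-vertex `P̂₄`-free graph with at least
`⌊n² / 8⌋` triangles. -/
theorem stmt_5 (n : ℕ) (hn : 8 ≤ n) :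
    ∃ G : SimpleGraph (Fin n), ¬ Contains hatP4 G ∧ n ^ 2 / 8 ≤ triangleCount G :=
  stmt_5_general n
end

section
/- Every connected graph on at least 2 vertices that contains no path on 4 vertices as a subgraph is either a triangle K₃ or a star K_{1,m} for some m ≥ 1. -/
/-!
A vertex `a` of maximum degree in a connected `P₄`-free graph is universal: if a neighbour `u`
of `a` had a neighbour `v` outside the closed neighbourhood of `a`, then `deg a ≥ deg u ≥ 2`
provides a second neighbour `z` of `a`, and `v - u - a - z` is a `P₄`. If some edge `uv` avoids
`a`, then `a, u, v` span a triangle and any further vertex `w` would give the `P₄` `w - a - u - v`;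
otherwise every edge contains `a`, and `G` is the star centred at `a`.
-/

namespace SimpleGraph

variable {V : Type*} {G : SimpleGraph V}

lemma contains_pathGraph_four {x₀ x₁ x₂ x₃ : V}
    (h₀₁ : G.Adj x₀ x₁) (h₁₂ : G.Adj x₁ x₂) (h₂₃ : G.Adj x₂ x₃)
    (h₀₂ : x₀ ≠ x₂) (h₀₃ : x₀ ≠ x₃) (h₁₃ : x₁ ≠ x₃) :
    Contains (pathGraph 4) G := by
  have := h₀₁.ne
  have := h₁₂.ne
  have := h₂₃.ne
  refine ⟨![x₀, x₁, x₂, x₃], ?_, ?_⟩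
  · intro i j hij
    fin_cases i <;> fin_cases j <;> simp_all
  · intro i j hij
    rw [pathGraph_adj] at hij
    fin_cases i <;> fin_cases j <;> simp_all [G.adj_comm]

lemma Preconnected.mem_of_adj_closed (hG : G.Preconnected) {S : Set V} {a : V} (ha : a ∈ S)
    (hS : ∀ ⦃u v⦄, u ∈ S → G.Adj u v → v ∈ S) (v : V) : v ∈ S := by
  by_contra hv
  obtain ⟨p⟩ := hG a v
  obtain ⟨d, -, hd₁, hd₂⟩ := p.exists_boundary_dart S ha hv
  exact hd₂ (hS hd₁ d.adj)

lemma isUniversal_of_degree_eq_maxDegree [Fintype V] [DecidableRel G.Adj]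
    (hG : G.Preconnected) (hfree : ¬ Contains (pathGraph 4) G) {a : V}
    (ha : G.maxDegree = G.degree a) : G.IsUniversal a := by
  classical
  rw [← insert_neighborSet_eq_univ, Set.eq_univ_iff_forall]
  refine hG.mem_of_adj_closed (Set.mem_insert a _) fun u v hu huv => ?_
  obtain rfl | hau := hu
  · exact Or.inr huv
  by_contra hv
  simp only [Set.mem_insert_iff, mem_neighborSet, not_or] at hv
  have hdeg_u : 2 ≤ G.degree u := by
    rw [← card_neighborFinset_eq_degree, ← Finset.card_pair (Ne.symm hv.1)]
    exact Finset.card_le_card (by simp [Finset.insert_subset_iff, hau.symm, huv])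
  have hdeg_a : 1 < (G.neighborFinset a).card := by
    rw [card_neighborFinset_eq_degree, ← ha]
    exact hdeg_u.trans (G.degree_le_maxDegree u)
  obtain ⟨z, hz, hzu⟩ := Finset.exists_mem_ne hdeg_a u
  rw [mem_neighborFinset] at hz
  exact hfree (contains_pathGraph_four huv.symm hau.symm hz hv.1
    (fun h => hv.2 (h ▸ hz)) hzu.symm)

lemma Connected.exists_isUniversal_of_not_contains_pathGraph_four [Finite V] (hG : G.Connected)
    (hfree : ¬ Contains (pathGraph 4) G) : ∃ a, G.IsUniversal a := by
  classical
  have := Fintype.ofFinite V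
  have := hG.nonempty
  obtain ⟨a, ha⟩ := G.exists_maximal_degree_vertex
  exact ⟨a, isUniversal_of_degree_eq_maxDegree hG.preconnected hfree ha⟩

lemma nonempty_iso_top_fin_three [Fintype V] (hfree : ¬ Contains (pathGraph 4) G) {a u v : V}
    (ha : G.IsUniversal a) (huv : G.Adj u v) (hua : u ≠ a) (hva : v ≠ a) :
    Nonempty (G ≃g (⊤ : SimpleGraph (Fin 3))) := by
  classical
  have hau := ha hua.symm
  have hav := ha hva.symm
  have hmem : ∀ w, w = a ∨ w = u ∨ w = v := by
    intro w
    by_contra! hw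
    exact hfree (contains_pathGraph_four (ha (Ne.symm hw.1)).symm hau huv hw.2.1 hw.2.2 hva.symm)
  have htop : G = ⊤ := eq_top_iff_forall_ne_adj.2 fun x y hxy => by
    rcases hmem x with rfl | rfl | rfl <;> rcases hmem y with rfl | rfl | rfl <;>
      simp_all [G.adj_comm]
  have hcard : Fintype.card V = 3 := by
    have huniv : (Finset.univ : Finset V) = {a, u, v} := by
      ext w
      simpa using hmem w
    rw [← Finset.card_univ, huniv]
    exact Finset.card_eq_three.2 ⟨a, u, v, hua.symm, hva.symm, huv.ne, rfl⟩
  subst htop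
  exact ⟨Iso.completeGraph (Fintype.equivFinOfCardEq hcard)⟩

lemma eq_starGraph_of_isUniversal {a : V} (ha : G.IsUniversal a)
    (hedge : ∀ u v, G.Adj u v → u ≠ a → v = a) : G = starGraph a := by
  ext u v
  rw [starGraph_adj]
  refine ⟨fun huv => ⟨huv.ne, or_iff_not_imp_left.2 (hedge u v huv)⟩, ?_⟩
  rintro ⟨huv, rfl | rfl⟩
  exacts [ha huv, (ha huv.symm).symm]

def starGraphIsoCompleteBipartiteGraph [DecidableEq V] (r : V) :
    starGraph r ≃g completeBipartiteGraph {v // v = r} {v // v ≠ r} where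
  toEquiv := (Equiv.sumCompl (· = r)).symm
  map_rel_iff' {u v} := by
    by_cases hu : u = r <;> by_cases hv : v = r <;>
      simp [hu, hv, Ne.symm]

end SimpleGraph

/-- Every connected graph on at least two vertices containing no `P₄` as a subgraph
is (isomorphic to) a triangle `K₃` or a star `K_{1,m}` for some `m ≥ 1`. -/
theorem stmt_12 {V : Type} [Fintype V] (G : SimpleGraph V)
    (hconn : G.Connected) (hcard : 2 ≤ Fintype.card V)
    (hfree : ¬ Contains (SimpleGraph.pathGraph 4) G) :
    Nonempty (G ≃g (⊤ : SimpleGraph (Fin 3))) ∨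
      ∃ m : ℕ, 1 ≤ m ∧ Nonempty (G ≃g completeBipartiteGraph (Fin 1) (Fin m)) := by
  classical
  obtain ⟨a, ha⟩ := hconn.exists_isUniversal_of_not_contains_pathGraph_four hfree
  by_cases hedge : ∃ u v, G.Adj u v ∧ u ≠ a ∧ v ≠ a
  · obtain ⟨u, v, huv, hua, hva⟩ := hedge
    exact .inl (SimpleGraph.nonempty_iso_top_fin_three hfree ha huv hua hva)
  · push Not at hedge
    obtain rfl := SimpleGraph.eq_starGraph_of_isUniversal ha hedge
    have : Nontrivial V := Fintype.one_lt_card_iff_nontrivial.mp hcard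
    obtain ⟨w, hw⟩ := exists_ne a
    refine .inr ⟨Fintype.card {v // v ≠ a}, Fintype.card_pos_iff.2 ⟨⟨w, hw⟩⟩,
      ⟨(SimpleGraph.starGraphIsoCompleteBipartiteGraph a).trans
        (SimpleGraph.completeBipartiteGraphCongr (Equiv.ofUnique _ _) (Fintype.equivFin _))⟩⟩
end

section
/- Let G be a P̂₄-free graph and let u₀, u₁, u₂, u₃ be four pairwise adjacent vertices of G, with S = {u₀, u₁, u₂, u₃}. Set Xᵢ = N(uᵢ) \ S for 0 ≤ i ≤ 3. Then the sets X₀, X₁, X₂, X₃ are pairwise disjoint. -/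
/-! A common neighbour `x ∉ S` of `u i` and `u j` makes `u i` the apex of a copy of `P̂₄` whose
path is `x, u j, u k, u l`, with `k, l` the two remaining indices. Relabelling `S` reduces to
`i = 0`, `j = 1`, where the path is `u` with `u 0` replaced by `x`. -/

open SimpleGraph Function

theorem hatP4_adj_some_some {i j : Fin 4} :
    hatP4.Adj (some i) (some j) ↔ (pathGraph 4).Adj i j := by
  simpa [hatP4, (pathGraph 4).adj_comm j i] using fun h : (pathGraph 4).Adj i j => h.ne

theorem contains_hatP4_of_apex {V : Type*} {G : SimpleGraph V} {p : Fin 4 → V}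
    (hp : Injective p) (hpath : ∀ ⦃i j⦄, (pathGraph 4).Adj i j → G.Adj (p i) (p j)) {a : V}
    (ha : a ∉ Set.range p) (hap : ∀ i, G.Adj a (p i)) :
    Contains hatP4 G := by
  refine ⟨fun o => o.elim a p, ?_, ?_⟩
  · rintro (_ | i) (_ | j) h
    · rfl
    · exact (ha ⟨j, h.symm⟩).elim
    · exact (ha ⟨i, h⟩).elim
    · exact congrArg some (hp h)
  · rintro (_ | i) (_ | j) h
    · exact (hatP4.loopless.irrefl _ h).elim
    · exact hap j
    · exact (hap i).symm
    · exact hpath (hatP4_adj_some_some.1 h)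

theorem Equiv.Perm.exists_apply_eq_and_apply_eq {α : Type*} [DecidableEq α] {a b i j : α}
    (hab : a ≠ b) (hij : i ≠ j) : ∃ σ : Equiv.Perm α, σ a = i ∧ σ b = j := by
  set b' := Equiv.swap a i b
  have hb' : b' ≠ i := by
    simpa [b'] using (Equiv.swap a i).injective.ne hab.symm
  refine ⟨Equiv.swap b' j * Equiv.swap a i, ?_, by simp [b']⟩
  simp [Equiv.swap_apply_of_ne_of_ne hb'.symm hij]

theorem contains_hatP4_of_adj_zero_one {V : Type*} {G : SimpleGraph V} {u : Fin 4 → V}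
    (hu : ∀ i j, i ≠ j → G.Adj (u i) (u j)) {x : V} (hx : x ∉ Set.range u)
    (h0 : G.Adj (u 0) x) (h1 : G.Adj (u 1) x) : Contains hatP4 G := by
  have hinj : Injective u := fun i j h => by_contra fun hij => (hu i j hij).ne h
  have hx' : ∀ i, x ≠ u i := fun i h => hx ⟨i, h.symm⟩
  refine contains_hatP4_of_apex (p := update u 0 x) ?_ ?_ (a := u 0) ?_ fun i => ?_
  · intro i j h
    simp only [update_apply] at h
    split_ifs at h with hi hj hj <;> grind
  · intro i j hij
    have hpath := pathGraph_adj.1 hij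
    rcases eq_or_ne i 0 with rfl | hi
    · obtain rfl : j = 1 := by omega
      simpa using h1.symm
    rcases eq_or_ne j 0 with rfl | hj
    · obtain rfl : i = 1 := by omega
      simpa using h1
    simpa [update_of_ne hi, update_of_ne hj] using hu i j hij.ne
  · rintro ⟨i, hi⟩
    simp only [update_apply] at hi
    split_ifs at hi with h
    · exact hx' 0 hi
    · exact h (hinj hi)
  · rcases eq_or_ne i 0 with rfl | hi
    · simpa using h0
    · simpa [update_of_ne hi] using hu 0 i hi.symm

/-- If `G` is `P̂₄`-free and `u 0, u 1, u 2, u 3` are pairwise adjacent, with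
`S` their vertex set and `Xᵢ = N(uᵢ) \ S`, then the `Xᵢ` are pairwise disjoint. -/
theorem stmt_13 {V : Type} (G : SimpleGraph V) (hfree : ¬ Contains hatP4 G)
    (u : Fin 4 → V) (hadj : ∀ i j : Fin 4, i ≠ j → G.Adj (u i) (u j)) :
    ∀ i j : Fin 4, i ≠ j →
      Disjoint (G.neighborSet (u i) \ Set.range u)
        (G.neighborSet (u j) \ Set.range u) := by
  intro i j hij
  obtain ⟨σ, rfl, rfl⟩ := Equiv.Perm.exists_apply_eq_and_apply_eq zero_ne_one hij
  refine Set.disjoint_left.2 fun x ⟨hx0, hxu⟩ ⟨hx1, _⟩ => hfree ?_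
  refine contains_hatP4_of_adj_zero_one (u := u ∘ σ)
    (fun a b hab => hadj _ _ (σ.injective.ne hab)) ?_ hx0 hx1
  rwa [EquivLike.range_comp]
end

section
/- Let G be a P̂₄-free graph and let u₀, u₁, u₂, u₃ be four pairwise adjacent vertices of G, with S = {u₀, u₁, u₂, u₃} and Xᵢ = N(uᵢ) \ S for 0 ≤ i ≤ 3. Then the number of triangles of G that contain at least one vertex of S equals 4 + Σ_{i=0}^{3} e(G[Xᵢ]), where e(G[Xᵢ]) is the number of edges of the subgraph of G induced on Xᵢ. -/
open Finset

namespace SimpleGraph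

variable {V : Type*} {G : SimpleGraph V}

theorem contains_hatP4_of_adj {a w₀ w₁ w₂ w₃ : V}
    (h₀₁ : G.Adj w₀ w₁) (h₁₂ : G.Adj w₁ w₂) (h₂₃ : G.Adj w₂ w₃)
    (ha₀ : G.Adj a w₀) (ha₁ : G.Adj a w₁) (ha₂ : G.Adj a w₂) (ha₃ : G.Adj a w₃)
    (h₀₂ : w₀ ≠ w₂) (h₀₃ : w₀ ≠ w₃) (h₁₃ : w₁ ≠ w₃) :
    Contains hatP4 G := by
  refine ⟨fun o => o.elim a ![w₀, w₁, w₂, w₃], ?_, ?_⟩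
  · have := ha₀.ne; have := ha₁.ne; have := ha₂.ne; have := ha₃.ne
    have := h₀₁.ne; have := h₁₂.ne; have := h₂₃.ne
    intro o₁ o₂ h
    fin_cases o₁ <;> fin_cases o₂ <;> simp_all
  · intro o₁ o₂ h
    have := G.symm
    fin_cases o₁ <;> fin_cases o₂ <;>
      simp_all [hatP4, fromRel_adj, pathGraph_adj] <;> tauto

theorem neighborSet_inter_subsingleton_of_hatP4_free [DecidableEq V]
    (hfree : ¬ Contains hatP4 G) {s : Finset V} (hs : G.IsNClique 4 s)
    {x : V} (hx : x ∉ s) : (G.neighborSet x ∩ s).Subsingleton := by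
  rintro v ⟨hxv, hv⟩ w ⟨hxw, hw⟩
  by_contra hvw
  have hw' : w ∈ s.erase v := mem_erase.2 ⟨Ne.symm hvw, hw⟩
  obtain ⟨a, b, hab, hrest⟩ : ∃ a b, a ≠ b ∧ (s.erase v).erase w = {a, b} := by
    rw [← card_eq_two, card_erase_of_mem hw', card_erase_of_mem hv, hs.card_eq]
  have ha : a ∈ (s.erase v).erase w := by simp [hrest]
  have hb : b ∈ (s.erase v).erase w := by simp [hrest]
  simp only [mem_erase] at ha hb
  have adj {p q : V} (hp : p ∈ s) (hq : q ∈ s) (hpq : p ≠ q) : G.Adj p q :=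
    hs.isClique hp hq hpq
  exact hfree <| contains_hatP4_of_adj (a := v) hxw (adj hw ha.2.2 (Ne.symm ha.1))
    (adj ha.2.2 hb.2.2 hab) hxv.symm (adj hv hw hvw) (adj hv ha.2.2 (Ne.symm ha.2.1))
    (adj hv hb.2.2 (Ne.symm hb.2.1)) (fun h => hx (h ▸ ha.2.2)) (fun h => hx (h ▸ hb.2.2))
    (Ne.symm hb.1)

theorem ncard_setOf_mem_cliqueSet_subset (s : Finset V) (hs : G.IsClique (s : Set V)) (k : ℕ) :
    {T : Finset V | T ∈ G.cliqueSet k ∧ T ⊆ s}.ncard = (#s).choose k := by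
  have : {T : Finset V | T ∈ G.cliqueSet k ∧ T ⊆ s} = s.powersetCard k := by
    ext T
    simp only [Set.mem_ofPred_eq, mem_cliqueSet_iff, mem_coe, mem_powersetCard, isNClique_iff]
    exact ⟨fun ⟨⟨_, hk⟩, hT⟩ => ⟨hT, hk⟩, fun ⟨hT, hk⟩ => ⟨⟨hs.subset hT, hk⟩, hT⟩⟩
  rw [this, Set.ncard_coe_finset, card_powersetCard]

theorem ncard_cliqueSet_three_mem_eq_ncard_edgeSet_induce (v : V) {X : Set V}
    (hX : X ⊆ G.neighborSet v) :
    {T : Finset V | T ∈ G.cliqueSet 3 ∧ v ∈ T ∧ ∀ w ∈ T, w ≠ v → w ∈ X}.ncard =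
      (G.induce X).edgeSet.ncard := by
  classical
  let ψ : Sym2 X → Finset V :=
    Sym2.lift ⟨fun x y => {v, (x : V), (y : V)}, fun x y => by dsimp only; rw [pair_comm]⟩
  have hne (x : X) : (x : V) ≠ v := fun h => G.irrefl (h ▸ hX x.2)
  have hinj : Set.InjOn ψ (G.induce X).edgeSet := by
    rintro ⟨a, b⟩ - ⟨c, d⟩ - h
    have hpair : ({(a : V), (b : V)} : Set V) = {(c : V), (d : V)} := by
      have := congrArg (fun T : Finset V => T.erase v) h
      simp only [ψ, Sym2.lift_mk] at this
      rw [erase_insert (by simp [Ne.symm (hne a), Ne.symm (hne b)]),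
        erase_insert (by simp [Ne.symm (hne c), Ne.symm (hne d)])] at this
      simpa using congrArg ((↑) : Finset V → Set V) this
    rcases Set.pair_eq_pair_iff.1 hpair with ⟨h₁, h₂⟩ | ⟨h₁, h₂⟩
    · exact Sym2.eq_iff.2 (Or.inl ⟨Subtype.ext h₁, Subtype.ext h₂⟩)
    · exact Sym2.eq_iff.2 (Or.inr ⟨Subtype.ext h₁, Subtype.ext h₂⟩)
  have himage : ψ '' (G.induce X).edgeSet =
      {T : Finset V | T ∈ G.cliqueSet 3 ∧ v ∈ T ∧ ∀ w ∈ T, w ≠ v → w ∈ X} := by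
    ext T
    constructor
    · rintro ⟨⟨a, b⟩, hab, rfl⟩
      refine ⟨is3Clique_triple_iff.2 ⟨hX a.2, hX b.2, hab⟩, by simp [ψ], ?_⟩
      simp only [ψ, Sym2.lift_mk, mem_insert, mem_singleton]
      rintro w (rfl | rfl | rfl) hw
      exacts [absurd rfl hw, a.2, b.2]
    · rintro ⟨hT, hvT, hTX⟩
      obtain ⟨x, y, hxy, hT'⟩ := card_eq_two.1 (hT.erase_of_mem hvT).card_eq
      have hx : x ∈ T.erase v := by simp [hT']
      have hy : y ∈ T.erase v := by simp [hT']
      rw [mem_erase] at hx hy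
      refine ⟨s(⟨x, hTX x hx.2 hx.1⟩, ⟨y, hTX y hy.2 hy.1⟩),
        hT.isClique hx.2 hy.2 hxy, ?_⟩
      calc ψ _ = insert v (T.erase v) := by rw [hT']; rfl
        _ = T := insert_erase hvT
  rw [← himage, hinj.ncard_image]

theorem ncard_cliqueSet_three_meeting [Finite V] {s : Finset V} (hs : G.IsClique (s : Set V))
    (hout : ∀ x ∉ s, (G.neighborSet x ∩ s).Subsingleton) :
    {T : Finset V | T ∈ G.cliqueSet 3 ∧ ∃ v ∈ s, v ∈ T}.ncard =
      (#s).choose 3 + ∑ v ∈ s, (G.induce (G.neighborSet v \ s)).edgeSet.ncard := by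
  classical
  set B : V → Set (Finset V) := fun v =>
    {T | T ∈ G.cliqueSet 3 ∧ v ∈ T ∧ ∀ w ∈ T, w ≠ v → w ∈ G.neighborSet v \ s}
  have hcover : {T : Finset V | T ∈ G.cliqueSet 3 ∧ ∃ v ∈ s, v ∈ T} =
      {T | T ∈ G.cliqueSet 3 ∧ T ⊆ s} ∪ ⋃ v ∈ (s : Set V), B v := by
    ext T
    simp only [Set.mem_union, Set.mem_ofPred_eq, Set.mem_iUnion, mem_coe, exists_prop]
    constructor
    · rintro ⟨hT, v, hvs, hvT⟩
      by_cases hTs : T ⊆ s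
      · exact Or.inl ⟨hT, hTs⟩
      obtain ⟨x, hxT, hxs⟩ := not_subset.1 hTs
      refine Or.inr ⟨v, hvs, hT, hvT, fun w hwT hwv =>
        ⟨hT.isClique hvT hwT (Ne.symm hwv), fun hws => hwv ?_⟩⟩
      have hxv : x ≠ v := fun h => hxs (h ▸ hvs)
      have hxw : x ≠ w := fun h => hxs (h ▸ hws)
      exact hout x hxs ⟨hT.isClique hxT hwT hxw, hws⟩ ⟨hT.isClique hxT hvT hxv, hvs⟩
    · rintro (⟨hT, hTs⟩ | ⟨v, hvs, hT, hvT, -⟩)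
      · obtain ⟨v, hvT⟩ := card_pos.1 (by rw [hT.card_eq]; norm_num)
        exact ⟨hT, v, hTs hvT, hvT⟩
      · exact ⟨hT, v, hvs, hvT⟩
  have hdisj : Disjoint {T | T ∈ G.cliqueSet 3 ∧ T ⊆ s} (⋃ v ∈ (s : Set V), B v) := by
    rw [Set.disjoint_left]
    rintro T ⟨hT, hTs⟩ hB
    obtain ⟨v, -, hTv⟩ := Set.mem_iUnion₂.1 hB
    obtain ⟨w, hwT, hwv⟩ := exists_mem_ne (by rw [hT.card_eq]; norm_num) v
    exact (hTv.2.2 w hwT hwv).2 (hTs hwT)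
  have hpair : (s : Set V).PairwiseDisjoint B := by
    intro v _ w hw hvw
    rw [Function.onFun, Set.disjoint_left]
    rintro T ⟨-, -, hTv⟩ ⟨-, hwT, -⟩
    exact (hTv w hwT (Ne.symm hvw)).2 hw
  rw [hcover, Set.ncard_union_eq hdisj, ncard_setOf_mem_cliqueSet_subset s hs,
    s.finite_toSet.ncard_biUnion (fun _ _ => Set.toFinite _) hpair, finsum_mem_coe_finset]
  exact congrArg _ (sum_congr rfl fun v _ =>
    ncard_cliqueSet_three_mem_eq_ncard_edgeSet_induce v Set.sdiff_subset)

end SimpleGraph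

/-- If `G` is `P̂₄`-free and `u 0, u 1, u 2, u 3` are pairwise adjacent, with
`S` their vertex set and `Xᵢ = N(uᵢ) \ S`, then the number of triangles of `G`
meeting `S` equals `4 + ∑ i, e(G[Xᵢ])`. -/
theorem stmt_14 {V : Type} [Fintype V] (G : SimpleGraph V)
    (hfree : ¬ Contains hatP4 G)
    (u : Fin 4 → V) (hadj : ∀ i j : Fin 4, i ≠ j → G.Adj (u i) (u j)) :
    {T : Finset V | T ∈ G.cliqueSet 3 ∧ ∃ i : Fin 4, u i ∈ T}.ncard =
      4 + ∑ i : Fin 4,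
        ((G.induce (G.neighborSet (u i) \ Set.range u)).edgeSet).ncard := by
  classical
  have hu : Function.Injective u := fun i j h => by_contra fun hij => (hadj i j hij).ne h
  have hrange : Set.range u = ↑(univ.image u) := by simp
  have hS : G.IsNClique 4 (univ.image u) := by
    refine ⟨?_, by rw [card_image_of_injective _ hu, card_fin]⟩
    rw [← hrange]
    rintro _ ⟨i, rfl⟩ _ ⟨j, rfl⟩ hij
    exact hadj i j (ne_of_apply_ne u hij)
  have key := SimpleGraph.ncard_cliqueSet_three_meeting hS.isClique
    fun x hx => SimpleGraph.neighborSet_inter_subsingleton_of_hatP4_free hfree hS hx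
  rw [hS.card_eq, sum_image hu.injOn, ← hrange] at key
  simpa using key
end

section
/- Let G be a graph that is P̂₄-free and contains no K₄ as a subgraph. Suppose a, b, x₁, x₂ are four distinct vertices such that {a,b,x₁} and {a,b,x₂} are both triangles of G. Then every triangle of G containing both a and x₁ is equal to {a,b,x₁}, i.e., if {a,x₁,y} is a triangle of G then y = b. -/
open SimpleGraph

theorem contains_iff_isContained {α β : Type*} {H : SimpleGraph α} {G : SimpleGraph β} :
    Contains H G ↔ H ⊑ G :=
  ⟨fun ⟨f, hf, hadj⟩ => ⟨⟨⟨f, fun h => hadj h⟩, hf⟩⟩,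
    fun ⟨f⟩ => ⟨f, f.injective, fun _ _ h => f.toHom.map_adj h⟩⟩

theorem contains_top_iff_not_cliqueFree {V : Type*} {G : SimpleGraph V} {n : ℕ} :
    Contains (⊤ : SimpleGraph (Fin n)) G ↔ ¬ G.CliqueFree n := by
  rw [contains_iff_isContained, not_cliqueFree_iff_top_isContained]

theorem SimpleGraph.not_cliqueFree_four_of_adj {V : Type*} {G : SimpleGraph V} {a b c d : V}
    (hab : G.Adj a b) (hac : G.Adj a c) (had : G.Adj a d)
    (hbc : G.Adj b c) (hbd : G.Adj b d) (hcd : G.Adj c d) : ¬ G.CliqueFree 4 := by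
  classical
  have h : G.IsNClique 4 (insert a {b, c, d}) :=
    (is3Clique_triple_iff.2 ⟨hbc, hbd, hcd⟩).insert (by simp [hab, hac, had])
  exact h.not_cliqueFree

theorem contains_hatP4_of_adj {V : Type*} {G : SimpleGraph V} {v p₀ p₁ p₂ p₃ : V}
    (hdist : [v, p₀, p₁, p₂, p₃].Nodup)
    (hv₀ : G.Adj v p₀) (hv₁ : G.Adj v p₁) (hv₂ : G.Adj v p₂) (hv₃ : G.Adj v p₃)
    (h₀₁ : G.Adj p₀ p₁) (h₁₂ : G.Adj p₁ p₂) (h₂₃ : G.Adj p₂ p₃) : Contains hatP4 G := by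
  simp only [List.nodup_cons, List.mem_cons, List.not_mem_nil, not_or] at hdist
  refine ⟨fun o => o.elim v ![p₀, p₁, p₂, p₃], ?_, ?_⟩
  · rintro (_ | i) (_ | j) h
    all_goals (try fin_cases i) <;> (try fin_cases j) <;> simp_all [eq_comm]
  · rintro (_ | i) (_ | j) h <;> simp only [hatP4, fromRel_adj, pathGraph_adj] at h
    all_goals (try fin_cases i) <;> (try fin_cases j) <;> simp_all [adj_comm]

/-- In a `P̂₄`-free, `K₄`-free graph, if `{a,b,x₁}` and `{a,b,x₂}` are triangles
with `a, b, x₁, x₂` distinct, then the only triangle through the edge `a x₁`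
is `{a,b,x₁}`: any common neighbor `y` of `a` and `x₁` equals `b`. -/
theorem stmt_15 {V : Type} (G : SimpleGraph V)
    (hP4 : ¬ Contains hatP4 G) (hK4 : ¬ Contains (⊤ : SimpleGraph (Fin 4)) G)
    (a b x₁ x₂ : V)
    (hd : a ≠ b ∧ a ≠ x₁ ∧ a ≠ x₂ ∧ b ≠ x₁ ∧ b ≠ x₂ ∧ x₁ ≠ x₂)
    (hab : G.Adj a b) (hax₁ : G.Adj a x₁) (hbx₁ : G.Adj b x₁)
    (hax₂ : G.Adj a x₂) (hbx₂ : G.Adj b x₂) :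
    ∀ y : V, G.Adj a y → G.Adj x₁ y → y = b := by
  intro y hay hx₁y
  by_contra hyb
  by_cases hyx₂ : y = x₂
  · subst hyx₂
    exact hK4 <| contains_top_iff_not_cliqueFree.2 <|
      not_cliqueFree_four_of_adj hab hax₁ hay hbx₁ hbx₂ hx₁y
  · obtain ⟨-, -, -, -, -, hx₁x₂⟩ := hd
    have hdist : [a, x₂, b, x₁, y].Nodup := by
      simp [hab.ne, hax₁.ne, hax₂.ne, hay.ne, hbx₁.ne, hbx₂.ne.symm, hx₁x₂.symm,
        hx₁y.ne, Ne.symm hyx₂, Ne.symm hyb]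
    exact hP4 <| contains_hatP4_of_adj hdist hax₂ hab hax₁ hay hbx₂.symm hbx₁ hx₁y
end
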